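/- arXiv:2304.05873 — 5 statements merged into one kernel-verified Lean document; each statement's English description precedes it below -/
import Mathlib

section
/- Every infinite uniformly locally finite metric space contains an infinite thin subset, i.e., an infinite subset A such that for every partial translation f of X with f(x) ≠ x for all x in its domain, the set f[A] ∩ A is finite. -/
theorem far_point {X : Type*} [MetricSpace X] [Infinite X]
    (hfin : ∀ r : ℝ, 0 < r → ∀ x : X, (Metric.closedBall x r).Finite)
    (F : Set X) (hF : F.Finite) (r : ℝ) :
    ∃ y : X, ∀ z ∈ F, r < dist z y := by
  have hr : (0:ℝ) < max r 1 := lt_max_of_lt_right one_pos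
  have hS : (⋃ z ∈ F, Metric.closedBall z (max r 1)).Finite :=
    hF.biUnion (fun z _ => hfin _ hr z)
  obtain ⟨y, hy⟩ := hS.infinite_compl.nonempty
  refine ⟨y, fun z hz => ?_⟩
  have hnot : y ∉ Metric.closedBall z (max r 1) := fun h => hy (Set.mem_biUnion hz h)
  rw [Metric.mem_closedBall, dist_comm] at hnot
  exact lt_of_le_of_lt (le_max_left r 1) (lt_of_not_ge hnot)

noncomputable def pickSeq {X : Type*} [MetricSpace X] [Infinite X]
    (hfin : ∀ r : ℝ, 0 < r → ∀ x : X, (Metric.closedBall x r).Finite) : ℕ → X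
  | n => Classical.choose (far_point hfin
      (Set.range (fun m : Fin n => pickSeq hfin m.val)) (Set.finite_range _) n)

lemma pickSeq_spec {X : Type*} [MetricSpace X] [Infinite X]
    (hfin : ∀ r : ℝ, 0 < r → ∀ x : X, (Metric.closedBall x r).Finite)
    {m n : ℕ} (h : m < n) : (n : ℝ) < dist (pickSeq hfin m) (pickSeq hfin n) := by
  have hs := Classical.choose_spec (far_point hfin
      (Set.range (fun k : Fin n => pickSeq hfin k.val)) (Set.finite_range _) (n : ℝ))
  nth_rewrite 2 [pickSeq]
  exact hs _ ⟨⟨m, h⟩, rfl⟩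

/-- Every infinite uniformly locally finite metric space contains an infinite
thin subset: an infinite `A` such that `f[A] ∩ A` is finite for every fixed-point-free
partial translation `f` of `X`. -/
theorem exists_infinite_thin_subset
    {X : Type*} [MetricSpace X] [Infinite X]
    (hulf : ∀ r : ℝ, 0 < r → ∃ N : ℕ, ∀ x : X,
      (Metric.closedBall x r).Finite ∧ (Metric.closedBall x r).ncard ≤ N) :
    ∃ A : Set X, A.Infinite ∧
      ∀ (D : Set X) (f : X → X), Set.InjOn f D →
        (∃ C : ℝ, ∀ x ∈ D, dist x (f x) ≤ C) →
        (∀ x ∈ D, f x ≠ x) →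
        (f '' (A ∩ D) ∩ A).Finite := by
  have hfin : ∀ r : ℝ, 0 < r → ∀ x : X, (Metric.closedBall x r).Finite := by
    intro r hr x
    obtain ⟨N, hN⟩ := hulf r hr
    exact (hN x).1
  have hinj : Function.Injective (pickSeq hfin) := by
    intro m n hmn
    by_contra hne
    rcases Nat.lt_or_ge m n with h | h
    · have := pickSeq_spec hfin h
      rw [hmn, dist_self] at this
      exact absurd this (not_lt.mpr (Nat.cast_nonneg n))
    · have h' : n < m := lt_of_le_of_ne h (Ne.symm hne)
      have := pickSeq_spec hfin h'
      rw [hmn, dist_self] at this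
      exact absurd this (not_lt.mpr (Nat.cast_nonneg m))
  refine ⟨Set.range (pickSeq hfin), Set.infinite_range_of_injective hinj, ?_⟩
  rintro D f hfinj ⟨C, hC⟩ hfp
  have hsub : f '' (Set.range (pickSeq hfin) ∩ D) ∩ Set.range (pickSeq hfin) ⊆
      f '' (pickSeq hfin '' {n : ℕ | (n : ℝ) < C}) := by
    rintro y ⟨hy1, hy2⟩
    obtain ⟨a, ⟨han, haD⟩, rfl⟩ := hy1
    obtain ⟨n, rfl⟩ := han
    obtain ⟨m, hm⟩ := hy2
    have hne : m ≠ n := by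
      intro h; subst h
      exact hfp (pickSeq hfin m) haD hm.symm
    have hdist : dist (pickSeq hfin n) (pickSeq hfin m) ≤ C := by
      rw [hm]; exact hC (pickSeq hfin n) haD
    have hnC : (n : ℝ) < C := by
      rcases Nat.lt_or_ge m n with h | h
      · have := pickSeq_spec hfin h
        rw [dist_comm] at hdist
        linarith
      · have h' : n < m := lt_of_le_of_ne h (Ne.symm hne)
        have h2 := pickSeq_spec hfin h'
        have h3 : (n : ℝ) < (m : ℝ) := by exact_mod_cast h'
        linarith
    exact ⟨pickSeq hfin n, ⟨n, hnC, rfl⟩, rfl⟩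
  refine Set.Finite.subset (Set.Finite.image _ (Set.Finite.image _ ?_)) hsub
  refine Set.Finite.subset (Set.finite_Iic ⌈C⌉₊) ?_
  intro n hn
  simp only [Set.mem_Iic]
  exact_mod_cast le_trans (le_of_lt hn) (Nat.le_ceil C)
end

section
/- Let X be a u.l.f. metric space, C ⊆ X a thin subset, and C = A ⊔ B a partition of C. Then for any two partial translations f and g of X, the set f[A] ∩ g[B] is finite. -/
/-- If `C` is a thin subset of a u.l.f. metric space `X` and `C = A ⊔ B` is a
partition, then `f[A] ∩ g[B]` is finite for any two partial translations `f, g` of `X`. -/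
theorem thin_partition_images_inter_finite
    {X : Type*} [MetricSpace X]
    (hulf : ∀ r : ℝ, 0 < r → ∃ N : ℕ, ∀ x : X,
      (Metric.closedBall x r).Finite ∧ (Metric.closedBall x r).ncard ≤ N)
    (C A B : Set X) (hAB : A ∪ B = C) (hdisj : Disjoint A B)
    (hthin : ∀ (D : Set X) (f : X → X), Set.InjOn f D →
      (∃ K : ℝ, ∀ x ∈ D, dist x (f x) ≤ K) →
      (∀ x ∈ D, f x ≠ x) →
      (f '' (C ∩ D) ∩ C).Finite)
    (Df Dg : Set X) (f g : X → X)
    (hf : Set.InjOn f Df) (hg : Set.InjOn g Dg)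
    (hfC : ∃ K : ℝ, ∀ x ∈ Df, dist x (f x) ≤ K)
    (hgC : ∃ K : ℝ, ∀ x ∈ Dg, dist x (g x) ≤ K) :
    (f '' (A ∩ Df) ∩ g '' (B ∩ Dg)).Finite := by
  classical
  obtain ⟨Kf, hKf⟩ := hfC
  obtain ⟨Kg, hKg⟩ := hgC
  set D : Set X := {a | a ∈ A ∩ Df ∧ ∃ b, b ∈ B ∩ Dg ∧ g b = f a} with hD
  set h : X → X := fun a =>
    if hx : ∃ b, b ∈ B ∩ Dg ∧ g b = f a then hx.choose else a with hh
  have hspec : ∀ a ∈ D, h a ∈ B ∩ Dg ∧ g (h a) = f a := by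
    intro a ha
    obtain ⟨-, hx⟩ := ha
    simp only [hh, dif_pos hx]
    exact hx.choose_spec
  have hinj : Set.InjOn h D := by
    intro a1 h1 a2 h2 he
    obtain ⟨⟨hb1, hb1'⟩, hg1⟩ := hspec a1 h1
    obtain ⟨⟨hb2, hb2'⟩, hg2⟩ := hspec a2 h2
    exact hf h1.1.2 h2.1.2 (by rw [← hg1, ← hg2, he])
  have hbd : ∃ K : ℝ, ∀ x ∈ D, dist x (h x) ≤ K := by
    refine ⟨Kf + Kg, fun a ha => ?_⟩
    obtain ⟨⟨hb, hb'⟩, hgb⟩ := hspec a ha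
    calc dist a (h a) ≤ dist a (f a) + dist (f a) (h a) := dist_triangle _ _ _
      _ ≤ Kf + Kg := add_le_add (hKf a ha.1.2)
          (by rw [← hgb, dist_comm]; exact hKg _ hb')
  have hfix : ∀ x ∈ D, h x ≠ x := by
    intro a ha he
    obtain ⟨⟨hb, hb'⟩, -⟩ := hspec a ha
    exact (hdisj.ne_of_mem ha.1.1 (he ▸ hb)) rfl
  have hfin := hthin D h hinj hbd hfix
  apply Set.Finite.subset (hfin.image g)
  rintro y ⟨⟨a, ⟨haA, haDf⟩, rfl⟩, ⟨b, ⟨hbB, hbDg⟩, hgb⟩⟩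
  have haD : a ∈ D := ⟨⟨haA, haDf⟩, b, ⟨hbB, hbDg⟩, hgb⟩
  obtain ⟨⟨hhB, -⟩, hgh⟩ := hspec a haD
  exact ⟨h a, ⟨⟨a, ⟨hAB ▸ Or.inl haA, haD⟩, rfl⟩, hAB ▸ Or.inr hhB⟩, hgh⟩
end

section
/- Let X be an infinite u.l.f. metric space. Then X is unbounded, and there exists a sequence (x_i)_{i∈ℕ} in X such that d(x_k, x_ℓ) ≥ max_{i,j < ℓ} d(x_i, x_j) + ℓ for all ℓ > k in ℕ. -/
noncomputable def ulfSeq {X : Type*} [MetricSpace X] (a : X)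
    (far : ∀ (z : X) (R : ℝ), ∃ w : X, R < dist z w) : ℕ → X
  | 0 => a
  | n + 1 => (far a (3 * dist a (ulfSeq a far n) + (n + 1))).choose

lemma ulfSeq_spec {X : Type*} [MetricSpace X] (a : X)
    (far : ∀ (z : X) (R : ℝ), ∃ w : X, R < dist z w) (n : ℕ) :
    3 * dist a (ulfSeq a far n) + (n + 1) < dist a (ulfSeq a far (n + 1)) :=
  (far a (3 * dist a (ulfSeq a far n) + (n + 1))).choose_spec

lemma ulfSeq_mono {X : Type*} [MetricSpace X] (a : X)
    (far : ∀ (z : X) (R : ℝ), ∃ w : X, R < dist z w) :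
    Monotone (fun n => dist a (ulfSeq a far n)) := by
  apply monotone_nat_of_le_succ
  intro n
  have h := ulfSeq_spec a far n
  have hd : 0 ≤ dist a (ulfSeq a far n) := dist_nonneg
  have : (0:ℝ) ≤ (n:ℝ) + 1 := by positivity
  nlinarith

/-- An infinite u.l.f. metric space is unbounded, and admits a sequence
`(x_i)` with `d(x_k, x_ℓ) ≥ max_{i,j<ℓ} d(x_i, x_j) + ℓ` for all `ℓ > k`. -/
theorem infinite_ulf_unbounded_and_separated_sequence
    {X : Type*} [MetricSpace X] [Infinite X]
    (hulf : ∀ r : ℝ, 0 < r → ∃ N : ℕ, ∀ x : X,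
      (Metric.closedBall x r).Finite ∧ (Metric.closedBall x r).ncard ≤ N) :
    (∀ R : ℝ, ∃ x y : X, R < dist x y) ∧
    ∃ x : ℕ → X, ∀ k ℓ : ℕ, k < ℓ →
      ∀ i j : ℕ, i < ℓ → j < ℓ → dist (x i) (x j) + ℓ ≤ dist (x k) (x ℓ) := by
  have hb : ∀ R : ℝ, ∃ x y : X, R < dist x y := by
    by_contra h
    push_neg at h
    obtain ⟨R, hR⟩ := h
    obtain ⟨N, hN⟩ := hulf (max R 1) (lt_of_lt_of_le one_pos (le_max_right R 1))
    have a : X := Classical.arbitrary X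
    have hsub : (Set.univ : Set X) ⊆ Metric.closedBall a (max R 1) := by
      intro y _
      exact Metric.mem_closedBall.2 (le_trans (hR y a) (le_max_left R 1))
    exact Set.infinite_univ ((hN a).1.subset hsub)
  have far : ∀ (z : X) (R : ℝ), ∃ w : X, R < dist z w := by
    intro z R
    obtain ⟨x, y, hxy⟩ := hb (R + R)
    rcases le_or_gt (dist z x) R with h1 | h1
    · refine ⟨y, ?_⟩
      have := dist_triangle x z y
      rw [dist_comm x z] at this
      linarith
    · exact ⟨x, h1⟩
  refine ⟨hb, ?_⟩
  have a : X := Classical.arbitrary X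
  refine ⟨ulfSeq a far, ?_⟩
  intro k ℓ hk i j hi hj
  obtain ⟨m, rfl⟩ : ∃ m, ℓ = m + 1 := ⟨ℓ - 1, by omega⟩
  set x := ulfSeq a far with hx
  have hmono := ulfSeq_mono a far
  have hi' : dist a (x i) ≤ dist a (x m) := hmono (by omega)
  have hj' : dist a (x j) ≤ dist a (x m) := hmono (by omega)
  have hk' : dist a (x k) ≤ dist a (x m) := hmono (by omega)
  have hspec := ulfSeq_spec a far m
  have h1 : dist (x i) (x j) ≤ dist a (x i) + dist a (x j) := by
    have := dist_triangle (x i) a (x j)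
    rw [dist_comm (x i) a] at this
    linarith
  have h2 : dist a (x (m + 1)) ≤ dist a (x k) + dist (x k) (x (m + 1)) :=
    dist_triangle a (x k) (x (m + 1))
  push_cast
  linarith
end

section
/- Let X be a u.l.f. metric space, let f : A → B be a partial translation with sup_{x∈A} d(x, f(x)) ≤ r and with f(x) ≠ x for all x ∈ A. Then there exists a finite partition A = A₁ ⊔ … ⊔ A_n such that each A_i is 2r-separated (d(x,y) > 2r for distinct x,y ∈ A_i), and consequently A_i ∩ f(A_i) = ∅ for all i. -/
noncomputable def greedyCol {X : Type*} [MetricSpace X] (A : Set X) (g : X → ℕ) (R : ℝ)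
    (n : ℕ) : ℕ :=
  sInf {m : ℕ | ∀ y, y ∈ A → ∀ _ : g y < n,
    (∃ x, x ∈ A ∧ g x = n ∧ y ≠ x ∧ dist x y ≤ R) → greedyCol A g R (g y) ≠ m}
termination_by n
decreasing_by assumption

theorem greedyCol_spec {X : Type*} [MetricSpace X] {A : Set X} {g : X → ℕ}
    (hg : Function.Injective g) {R : ℝ} {x : X} (hx : x ∈ A) {N : ℕ}
    (hfin : (Metric.closedBall x R).Finite)
    (hcard : (Metric.closedBall x R).ncard ≤ N) :
    greedyCol A g R (g x) ≤ N ∧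
    ∀ y ∈ A, g y < g x → y ≠ x → dist x y ≤ R →
      greedyCol A g R (g y) ≠ greedyCol A g R (g x) := by
  set S : Set X := {y | y ∈ A ∧ g y < g x ∧ y ≠ x ∧ dist x y ≤ R} with hS
  have hSsub : S ⊆ Metric.closedBall x R := by
    intro y hy
    simp only [Metric.mem_closedBall]
    rw [dist_comm]
    exact hy.2.2.2
  have hSfin : S.Finite := hfin.subset hSsub
  have hScard : S.ncard ≤ N := le_trans (Set.ncard_le_ncard hSsub hfin) hcard
  set T : Set ℕ := (fun y => greedyCol A g R (g y)) '' S with hT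
  have hTfin : T.Finite := hSfin.image _
  have hTcard : T.ncard ≤ N := le_trans (Set.ncard_image_le hSfin) hScard
  obtain ⟨m, hmN, hmT⟩ : ∃ m ≤ N, m ∉ T := by
    by_contra h
    push_neg at h
    have hsub : Set.Iic N ⊆ T := fun m hm => h m hm
    have : Set.Iic N = ((Finset.Iic N : Finset ℕ) : Set ℕ) := by simp
    have hc : (Set.Iic N).ncard ≤ T.ncard := Set.ncard_le_ncard hsub hTfin
    rw [this, Set.ncard_coe_finset] at hc
    simp [Nat.card_Iic] at hc
    omega
  set D : Set ℕ := {m : ℕ | ∀ y, y ∈ A → ∀ _ : g y < g x,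
    (∃ x', x' ∈ A ∧ g x' = g x ∧ y ≠ x' ∧ dist x' y ≤ R) → greedyCol A g R (g y) ≠ m} with hD
  have hDeq : greedyCol A g R (g x) = sInf D := by rw [greedyCol]
  have hTD : Tᶜ ⊆ D := by
    intro m hm y hyA hylt ⟨x', hx'A, hgx', hyx', hdx'⟩
    obtain rfl : x' = x := hg hgx'
    intro hcontra
    exact hm ⟨y, ⟨hyA, hylt, hyx', hdx'⟩, hcontra⟩
  have hmD : m ∈ D := hTD hmT
  constructor
  · rw [hDeq]; exact le_trans (Nat.sInf_le hmD) hmN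
  · intro y hyA hylt hyx hdxy
    have hmem : sInf D ∈ D := Nat.sInf_mem ⟨m, hmD⟩
    rw [hDeq]
    exact hmem y hyA hylt ⟨x, hx, rfl, hyx, hdxy⟩

/-- A fixed-point-free partial translation `f : A → B` with propagation at most
`r` on a u.l.f. space admits a finite partition `A = A₁ ⊔ … ⊔ A_n` into `2r`-separated
pieces, and consequently `A_i ∩ f(A_i) = ∅` for each `i`. -/
theorem partial_translation_partition_separated
    {X : Type*} [MetricSpace X]
    (hulf : ∀ s : ℝ, 0 < s → ∃ N : ℕ, ∀ x : X,
      (Metric.closedBall x s).Finite ∧ (Metric.closedBall x s).ncard ≤ N)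
    (A : Set X) (f : X → X) (hinj : Set.InjOn f A)
    (r : ℝ) (hr : 0 < r) (hprop : ∀ x ∈ A, dist x (f x) ≤ r)
    (hnofix : ∀ x ∈ A, f x ≠ x) :
    ∃ (n : ℕ) (P : Fin n → Set X),
      (⋃ i, P i) = A ∧
      (Pairwise fun i j => Disjoint (P i) (P j)) ∧
      (∀ i, ∀ x ∈ P i, ∀ y ∈ P i, x ≠ y → 2 * r < dist x y) ∧
      (∀ i, P i ∩ f '' (P i) = ∅) := by
  rcases Set.eq_empty_or_nonempty A with hA | ⟨x₀, hx₀⟩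
  · refine ⟨0, fun i => ∅, ?_, ?_, ?_, ?_⟩
    · simp [hA]
    · intro i; exact i.elim0
    · intro i; exact i.elim0
    · intro i; exact i.elim0
  -- X is countable
  have : Countable X := by
    have hcov : (Set.univ : Set X) ⊆ ⋃ n : ℕ, Metric.closedBall x₀ ((n : ℝ) + 1) := by
      intro x _
      refine Set.mem_iUnion.2 ⟨⌈dist x x₀⌉₊, ?_⟩
      simp only [Metric.mem_closedBall]
      calc dist x x₀ ≤ ⌈dist x x₀⌉₊ := Nat.le_ceil _
        _ ≤ (⌈dist x x₀⌉₊ : ℝ) + 1 := by linarith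
    have : (Set.univ : Set X).Countable := by
      refine Set.Countable.mono hcov (Set.countable_iUnion fun n => ?_)
      obtain ⟨N, hN⟩ := hulf ((n : ℝ) + 1) (by positivity)
      exact (hN x₀).1.countable
    exact Set.countable_univ_iff.mp this
  obtain ⟨g, hg⟩ := Countable.exists_injective_nat X
  obtain ⟨N, hN⟩ := hulf (2 * r) (by linarith)
  have key : ∀ x ∈ A, greedyCol A g (2*r) (g x) ≤ N ∧
      ∀ y ∈ A, g y < g x → y ≠ x → dist x y ≤ 2*r →
        greedyCol A g (2*r) (g y) ≠ greedyCol A g (2*r) (g x) :=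
    fun x hx => greedyCol_spec hg hx (hN x).1 (hN x).2
  -- two distinct close points have distinct colors
  have hdiff : ∀ x ∈ A, ∀ y ∈ A, x ≠ y → dist x y ≤ 2*r →
      greedyCol A g (2*r) (g x) ≠ greedyCol A g (2*r) (g y) := by
    intro x hx y hy hxy hd
    rcases lt_or_gt_of_ne (fun h => hxy (hg h)) with h | h
    · exact ((key y hy).2 x hx h hxy (by rwa [dist_comm]))
    · exact fun he => ((key x hx).2 y hy h (Ne.symm hxy) hd) he.symm
  refine ⟨N + 1, fun i => {x | x ∈ A ∧ greedyCol A g (2*r) (g x) = i.val}, ?_, ?_, ?_, ?_⟩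
  · ext x
    simp only [Set.mem_iUnion, Set.mem_setOf_eq]
    constructor
    · rintro ⟨i, hx, _⟩; exact hx
    · intro hx
      exact ⟨⟨greedyCol A g (2*r) (g x), Nat.lt_succ_of_le (key x hx).1⟩, hx, rfl⟩
  · intro i j hij
    rw [Set.disjoint_left]
    rintro x ⟨hxA, hxi⟩ ⟨_, hxj⟩
    exact hij (Fin.ext (hxi ▸ hxj))
  · intro i x hx y hy hxy
    by_contra h
    push_neg at h
    exact hdiff x hx.1 y hy.1 hxy h (hx.2.trans hy.2.symm)
  · intro i
    ext x
    simp only [Set.mem_inter_iff, Set.mem_image, Set.mem_empty_iff_false, iff_false]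
    rintro ⟨⟨hxA, hxc⟩, y, ⟨hyA, hyc⟩, rfl⟩
    have hne : f y ≠ y := hnofix y hyA
    have hd : dist (f y) y ≤ 2 * r := by
      rw [dist_comm]
      linarith [hprop y hyA]
    exact hdiff (f y) hxA y hyA hne hd (hxc.trans hyc.symm)
end

section
/- Let T_n be the n-branching tree with graph metric. For every y ∈ T_n, the characteristic function χ_{y⌢T_n} of the set y⌢T_n = {y⌢z : z ∈ T_n} of words starting with y is a Higson function: for all ε > 0 and R > 0 there is a finite set F ⊆ T_n such that for all x, z ∉ F with d(x,z) < R one has |χ_{y⌢T_n}(x) − χ_{y⌢T_n}(z)| < ε. -/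
/-- Length of the longest common prefix of two words. -/
def lcpLen {α : Type*} [DecidableEq α] : List α → List α → ℕ
  | a :: as, b :: bs => if a = b then lcpLen as bs + 1 else 0
  | _, _ => 0

/-- The shortest-path (graph) metric on the `n`-branching tree of finite words. -/
def treeDist {α : Type*} [DecidableEq α] (x y : List α) : ℕ :=
  (x.length - lcpLen x y) + (y.length - lcpLen x y)

lemma lcp_take {α : Type*} [DecidableEq α] :
    ∀ (x z : List α) (k : ℕ), k ≤ lcpLen x z → x.take k = z.take k
  | _, _, 0, _ => by simp
  | [], z, k + 1, h => by simp [lcpLen] at h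
  | a :: as, [], k + 1, h => by simp [lcpLen] at h
  | a :: as, b :: bs, k + 1, h => by
      by_cases hab : a = b
      · simp only [lcpLen, if_pos hab, Nat.add_le_add_iff_right] at h
        simp [hab, lcp_take as bs k h]
      · simp [lcpLen, if_neg hab] at h

/-- For every `y ∈ T_n`, the characteristic function of the set
`y⌢T_n = {y⌢z : z ∈ T_n}` of words starting with `y` is a Higson function on the
`n`-branching tree. -/
theorem indicator_of_prefix_set_is_higson
    (n : ℕ) (y : List (Fin n)) :
    ∀ ε : ℝ, 0 < ε → ∀ R : ℝ, 0 < R →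
      ∃ F : Finset (List (Fin n)),
        ∀ x z : List (Fin n), x ∉ F → z ∉ F → (treeDist x z : ℝ) < R →
          |Set.indicator {w : List (Fin n) | y <+: w} (1 : List (Fin n) → ℝ) x -
            Set.indicator {w : List (Fin n) | y <+: w} (1 : List (Fin n) → ℝ) z| < ε := by
  intro ε hε R hR
  set m := ⌈R⌉₊ with hm
  set L := y.length + m with hL
  refine ⟨(Finset.range (L + 1)).biUnion
    (fun k => (Finset.univ : Finset (List.Vector (Fin n) k)).image
      (fun v => v.toList)), ?_⟩
  have hmem : ∀ x : List (Fin n), x.length ≤ L →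
      x ∈ (Finset.range (L + 1)).biUnion
        (fun k => (Finset.univ : Finset (List.Vector (Fin n) k)).image
          (fun v => v.toList)) := by
    intro x hx
    refine Finset.mem_biUnion.2 ⟨x.length, Finset.mem_range.2 (by omega), ?_⟩
    exact Finset.mem_image.2 ⟨⟨x, rfl⟩, Finset.mem_univ _, rfl⟩
  intro x z hx hz hd
  have hxL : L < x.length := by by_contra h; exact hx (hmem x (by omega))
  have hzL : L < z.length := by by_contra h; exact hz (hmem z (by omega))
  have hdm : treeDist x z < m := by
    have : (treeDist x z : ℝ) < (m : ℝ) := lt_of_lt_of_le hd (Nat.le_ceil R)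
    exact_mod_cast this
  have hlcp : y.length ≤ lcpLen x z := by
    have h1 : x.length - lcpLen x z ≤ treeDist x z := Nat.le_add_right _ _
    have h2 : lcpLen x z ≤ x.length := by
      clear * -
      induction x generalizing z with
      | nil => simp [lcpLen]
      | cons a as ih =>
        cases z with
        | nil => simp [lcpLen]
        | cons b bs =>
          by_cases hab : a = b
          · simpa [lcpLen, hab] using ih bs
          · simp [lcpLen, hab]
    omega
  have htake : x.take y.length = z.take y.length := lcp_take x z y.length hlcp
  have hiff : (y <+: x) ↔ (y <+: z) := by
    rw [List.prefix_iff_eq_take, List.prefix_iff_eq_take, htake]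
  have : Set.indicator {w : List (Fin n) | y <+: w} (1 : List (Fin n) → ℝ) x =
      Set.indicator {w : List (Fin n) | y <+: w} (1 : List (Fin n) → ℝ) z := by
    by_cases hp : y <+: x
    · simp [Set.indicator, Set.mem_setOf_eq, hp, hiff.1 hp]
    · simp [Set.indicator, Set.mem_setOf_eq, hp, hiff.not.1 hp]
  simpa [this] using hε
end
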